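/- Let N ≥ 5, set 2** = 2N/(N−4), let g : ℝ → ℝ be continuous and odd with limsup_{s→0} g(s)/s = −m for some m > 0 and lim_{s→+∞} g(s)/s^{2**−1} = 0, and fix m' ∈ (0, m) and q ∈ (2, 2**). Then lim_{s→+∞} h(s)/s^{2**−1} = lim_{s→+∞} h̄(s)/s^{2**−1} = 0 and lim_{s→+∞} H(s)/s^{2**} = lim_{s→+∞} H̄(s)/s^{2**} = 0. -/

import Mathlib

open MeasureTheory Real Filter

/-- `h(s) = (m's + g(s))₊` for `s ≥ 0`, extended as an odd function for `s < 0`. -/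
noncomputable def hfun (g : ℝ → ℝ) (m' : ℝ) (s : ℝ) : ℝ :=
  if 0 ≤ s then max (m' * s + g s) 0 else -max (m' * (-s) + g (-s)) 0

/-- `h̄(s) = s^{q-1} sup_{0<t≤s} h(t)/t^{q-1}` for `s > 0`, `h̄(0)=0`,
extended as an odd function for `s < 0`. -/
noncomputable def hbar (g : ℝ → ℝ) (m' q : ℝ) (s : ℝ) : ℝ :=
  if 0 < s then s ^ (q - 1) * sSup ((fun t => hfun g m' t / t ^ (q - 1)) '' Set.Ioc 0 s)
  else if s < 0 then
    -((-s) ^ (q - 1) * sSup ((fun t => hfun g m' t / t ^ (q - 1)) '' Set.Ioc 0 (-s)))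
  else 0

/-- `H(s) = ∫₀ˢ h(t) dt`. -/
noncomputable def Hfun (g : ℝ → ℝ) (m' : ℝ) (s : ℝ) : ℝ :=
  ∫ t in (0 : ℝ)..s, hfun g m' t

/-- `H̄(s) = ∫₀ˢ h̄(t) dt`. -/
noncomputable def Hbar (g : ℝ → ℝ) (m' q : ℝ) (s : ℝ) : ℝ :=
  ∫ t in (0 : ℝ)..s, hbar g m' q t

/-!
Write `p = 2** - 1` and work with `f =o[atTop] (· ^ p)`. Near `0⁺` the limsup hypothesis makes
`m's + g(s)` negative, so `h` vanishes there; hence `t ↦ h(t)/t^{q-1}` is bounded on every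
`(0, s]`, and `h̄` is monotone on `[0, ∞)`, in particular locally integrable. Since
`h(t)/t^{q-1} = o(t^{p-q+1})` with `p - q + 1 > 0`, and the running supremum of an `o(s^r)`
function (`r > 0`) is again `o(s^r)`, multiplying back by `s^{q-1}` gives `h̄ = o(s^p)`.
Integrating an `o(s^p)` function gives `o(s^{p+1})`.
-/

open Asymptotics Set Topology

lemma isLittleO_rpow_iff_tendsto_div {f : ℝ → ℝ} {p : ℝ} :
    f =o[atTop] (· ^ p) ↔ Tendsto (fun s => f s / s ^ p) atTop (𝓝 0) :=
  isLittleO_iff_tendsto' <| (eventually_gt_atTop 0).mono fun _ hs h =>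
    absurd h (rpow_pos_of_pos hs p).ne'

lemma isLittleO_rpow_rpow_atTop {a b : ℝ} (hab : a < b) :
    (fun s : ℝ => s ^ a) =o[atTop] (· ^ b) := by
  rw [isLittleO_rpow_iff_tendsto_div]
  refine (tendsto_rpow_neg_atTop (sub_pos.2 hab)).congr' ?_
  filter_upwards [eventually_gt_atTop 0] with s hs
  rw [← rpow_sub hs, neg_sub]

lemma isLittleO_intervalIntegral_rpow {f : ℝ → ℝ} {p : ℝ} (hp : 0 ≤ p)
    (hf : ∀ b, 0 ≤ b → IntervalIntegrable f volume 0 b) (hfo : f =o[atTop] (· ^ p)) :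
    (fun s => ∫ t in (0 : ℝ)..s, f t) =o[atTop] (· ^ (p + 1)) := by
  refine IsLittleO.of_bound fun ε hε => ?_
  obtain ⟨M, hM1, hM⟩ :
      ∃ M, 1 ≤ M ∧ ∀ t, M ≤ t → ‖f t‖ ≤ ε / 2 * ‖t ^ p‖ := by
    obtain ⟨M, hM⟩ := eventually_atTop.1 (hfo.bound (half_pos hε))
    exact ⟨max M 1, le_max_right _ _, fun t ht => hM t (le_of_max_le_left ht)⟩
  have hhead : ∀ᶠ s in atTop, ‖∫ t in (0 : ℝ)..M, f t‖ ≤ ε / 2 * s ^ (p + 1) :=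
    ((tendsto_rpow_atTop (by linarith)).const_mul_atTop (half_pos hε)).eventually_ge_atTop _
  filter_upwards [hhead, eventually_ge_atTop M] with s hhead hMs
  have hs : 0 < s := by linarith
  have htail : ‖∫ t in M..s, f t‖ ≤ ε / 2 * s ^ p * |s - M| := by
    refine intervalIntegral.norm_integral_le_of_norm_le_const fun t ht => ?_
    rw [uIoc_of_le hMs] at ht
    have ht0 : 0 ≤ t := by linarith [ht.1]
    calc ‖f t‖ ≤ ε / 2 * ‖t ^ p‖ := hM t ht.1.le
      _ ≤ ε / 2 * s ^ p := by
        rw [norm_of_nonneg (rpow_nonneg ht0 p)]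
        gcongr
        exact ht.2
  have htail' : ε / 2 * s ^ p * |s - M| ≤ ε / 2 * s ^ (p + 1) := by
    rw [abs_of_nonneg (sub_nonneg.2 hMs), rpow_add_one hs.ne', ← mul_assoc]
    have : 0 ≤ ε / 2 * s ^ p := by positivity
    nlinarith
  rw [← intervalIntegral.integral_add_adjacent_intervals (hf M (by linarith))
      ((hf M (by linarith)).symm.trans (hf s hs.le)), norm_of_nonneg (rpow_nonneg hs.le _)]
  linarith [norm_add_le (∫ t in (0 : ℝ)..M, f t) (∫ t in M..s, f t)]

lemma isLittleO_sSup_image_Ioc {φ : ℝ → ℝ} {r : ℝ} (hr : 0 < r)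
    (hbdd : ∀ s, BddAbove (φ '' Ioc 0 s)) (hφ : φ =o[atTop] (· ^ r)) :
    (fun s => sSup (φ '' Ioc 0 s)) =o[atTop] (· ^ r) := by
  refine IsLittleO.of_bound fun ε hε => ?_
  obtain ⟨M, hM⟩ := eventually_atTop.1 (hφ.bound hε)
  have hhead : ∀ᶠ s in atTop, sSup (φ '' Ioc 0 M) ≤ ε * s ^ r :=
    ((tendsto_rpow_atTop hr).const_mul_atTop hε).eventually_ge_atTop _
  filter_upwards [hhead, eventually_ge_atTop M, eventually_gt_atTop 0] with s hhead hMs hs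
  have hφ_le : ∀ t, 0 < t → M ≤ t → |φ t| ≤ ε * t ^ r := fun t ht hMt => by
    simpa [abs_of_pos (rpow_pos_of_pos ht r)] using hM t hMt
  have hlower : φ s ≤ sSup (φ '' Ioc 0 s) := le_csSup (hbdd s) ⟨s, ⟨hs, le_rfl⟩, rfl⟩
  have hupper : sSup (φ '' Ioc 0 s) ≤ ε * s ^ r := by
    refine csSup_le ((nonempty_Ioc.2 hs).image φ) ?_
    rintro _ ⟨t, ⟨ht0, hts⟩, rfl⟩
    rcases le_total t M with htM | hMt
    · exact (le_csSup (hbdd M) ⟨t, ⟨ht0, htM⟩, rfl⟩).trans hhead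
    · calc φ t ≤ ε * t ^ r := (le_abs_self _).trans (hφ_le t ht0 hMt)
        _ ≤ ε * s ^ r := by gcongr
  rw [norm_of_nonneg (rpow_nonneg hs.le r), Real.norm_eq_abs, abs_le]
  constructor <;> linarith [neg_abs_le (φ s), hφ_le s hs hMs]

lemma bddAbove_image_Ioc_of_eventually_eq_zero {φ : ℝ → ℝ} (hφ : ContinuousOn φ (Ioi 0))
    (h0 : ∀ᶠ t in 𝓝[>] 0, φ t = 0) (s : ℝ) : BddAbove (φ '' Ioc 0 s) := by
  obtain ⟨δ, hδ, hδφ⟩ := (nhdsGT_basis (0 : ℝ)).eventually_iff.1 h0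
  have hsub : Ioc 0 s ⊆ Ioo 0 δ ∪ Icc δ s := fun t ht =>
    (lt_or_ge t δ).imp (fun h => ⟨ht.1, h⟩) (fun h => ⟨h, ht.2⟩)
  refine BddAbove.mono (image_mono hsub) ?_
  rw [image_union]
  refine BddAbove.union ⟨0, ?_⟩
    (isCompact_Icc.bddAbove_image (hφ.mono fun t ht => hδ.trans_le ht.1))
  rintro _ ⟨t, ht, rfl⟩
  exact (hδφ ht).le

section

variable {g : ℝ → ℝ} {m' : ℝ}

lemma hfun_of_nonneg {s : ℝ} (hs : 0 ≤ s) : hfun g m' s = max (m' * s + g s) 0 := if_pos hs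

lemma hfun_nonneg {s : ℝ} (hs : 0 ≤ s) : 0 ≤ hfun g m' s :=
  (hfun_of_nonneg hs).symm ▸ le_max_right _ _

lemma continuousOn_hfun (hg : Continuous g) : ContinuousOn (hfun g m') (Ici 0) :=
  (((continuous_const.mul continuous_id).add hg).max continuous_const).continuousOn.congr
    fun _ hs => hfun_of_nonneg hs

lemma intervalIntegrable_hfun (hg : Continuous g) {b : ℝ} (hb : 0 ≤ b) :
    IntervalIntegrable (hfun g m') volume 0 b :=
  ((continuousOn_hfun hg).mono
    (by rw [uIcc_of_le hb]; exact Icc_subset_Ici_self)).intervalIntegrable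

lemma hfun_eventually_eq_zero (hm' : 0 ≤ m')
    (hlim : limsup (fun s => g s / s) (𝓝[≠] 0) < -m') :
    ∀ᶠ t in 𝓝[>] 0, hfun g m' t = 0 := by
  -- an unbounded limsup would have the junk value `0`, which is not `< -m'`
  have hbdd : IsBoundedUnder (· ≤ ·) (𝓝[≠] 0) fun s => g s / s := by
    by_contra h
    rw [Real.limsup_of_not_isBoundedUnder h] at hlim
    linarith
  filter_upwards [self_mem_nhdsWithin,
    nhdsWithin_mono 0 (fun t (ht : 0 < t) => ht.ne') (eventually_lt_of_limsup_lt hlim hbdd)]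
    with t ht hgt
  rw [div_lt_iff₀ ht] at hgt
  rw [hfun_of_nonneg ht.le, max_eq_right (by linarith)]

lemma isLittleO_hfun {p : ℝ} (hp : 1 < p) (hg : g =o[atTop] (· ^ p)) :
    hfun g m' =o[atTop] (· ^ p) := by
  have hlin : (fun s : ℝ => m' * s) =o[atTop] (· ^ p) :=
    ((isLittleO_rpow_rpow_atTop hp).congr_left fun s => rpow_one s).const_mul_left m'
  refine IsBigO.trans_isLittleO (g := fun s => m' * s + g s) ?_ (hlin.add hg)
  refine IsBigO.of_bound' ?_
  filter_upwards [eventually_ge_atTop 0] with s hs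
  rw [hfun_of_nonneg hs, norm_of_nonneg (le_max_right _ _)]
  exact max_le (le_abs_self _) (norm_nonneg _)

variable {q : ℝ}

lemma hbar_of_pos {s : ℝ} (hs : 0 < s) :
    hbar g m' q s = s ^ (q - 1) * sSup ((fun t => hfun g m' t / t ^ (q - 1)) '' Ioc 0 s) :=
  if_pos hs

lemma sSup_hfun_div_rpow_nonneg (s : ℝ) :
    0 ≤ sSup ((fun t => hfun g m' t / t ^ (q - 1)) '' Ioc 0 s) :=
  Real.sSup_nonneg <| by
    rintro _ ⟨t, ht, rfl⟩
    exact div_nonneg (hfun_nonneg ht.1.le) (rpow_nonneg ht.1.le _)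

lemma hbar_nonneg {s : ℝ} (hs : 0 ≤ s) : 0 ≤ hbar g m' q s := by
  rcases hs.eq_or_lt with rfl | hs
  · simp [hbar]
  · rw [hbar_of_pos hs]
    exact mul_nonneg (rpow_nonneg hs.le _) (sSup_hfun_div_rpow_nonneg s)

variable (hg : Continuous g) (h0 : ∀ᶠ t in 𝓝[>] 0, hfun g m' t = 0)
include hg h0

lemma bddAbove_hfun_div_rpow (s : ℝ) :
    BddAbove ((fun t => hfun g m' t / t ^ (q - 1)) '' Ioc 0 s) :=
  bddAbove_image_Ioc_of_eventually_eq_zero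
    (((continuousOn_hfun hg).mono Ioi_subset_Ici_self).div
      (continuousOn_id.rpow_const fun t ht => Or.inl (ne_of_gt ht))
      fun t ht => (rpow_pos_of_pos ht _).ne')
    (h0.mono fun t ht => by simp [ht]) s

lemma monotoneOn_hbar (hq : 1 ≤ q) : MonotoneOn (hbar g m' q) (Ici 0) := by
  intro a (ha : 0 ≤ a) b (hb : 0 ≤ b) hab
  rcases ha.eq_or_lt with rfl | ha
  · simpa [hbar] using hbar_nonneg hb
  rw [hbar_of_pos ha, hbar_of_pos (ha.trans_le hab)]
  exact mul_le_mul (rpow_le_rpow ha.le hab (by linarith))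
    (csSup_le_csSup (bddAbove_hfun_div_rpow hg h0 b) ((nonempty_Ioc.2 ha).image _)
      (image_mono (Ioc_subset_Ioc_right hab)))
    (sSup_hfun_div_rpow_nonneg a) (rpow_nonneg hb _)

lemma intervalIntegrable_hbar (hq : 1 ≤ q) {b : ℝ} (hb : 0 ≤ b) :
    IntervalIntegrable (hbar g m' q) volume 0 b :=
  ((monotoneOn_hbar hg h0 hq).mono
    (by rw [uIcc_of_le hb]; exact Icc_subset_Ici_self)).intervalIntegrable

lemma isLittleO_hbar {p : ℝ} (hqp : q - 1 < p) (hh : hfun g m' =o[atTop] (· ^ p)) :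
    hbar g m' q =o[atTop] (· ^ p) := by
  have hφ : (fun t => hfun g m' t / t ^ (q - 1)) =o[atTop] (· ^ (p - (q - 1))) := by
    refine (hh.mul_isBigO (isBigO_refl (fun t : ℝ => (t ^ (q - 1))⁻¹) atTop)).congr'
      (Eventually.of_forall fun t => (div_eq_mul_inv _ _).symm) ?_
    filter_upwards [eventually_gt_atTop 0] with t ht
    rw [rpow_sub ht p, div_eq_mul_inv]
  have hS := isLittleO_sSup_image_Ioc (sub_pos.2 hqp) (bddAbove_hfun_div_rpow hg h0) hφ
  refine ((isBigO_refl (· ^ (q - 1)) atTop).mul_isLittleO hS).congr' ?_ ?_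
  · filter_upwards [eventually_gt_atTop 0] with s hs
    exact (hbar_of_pos hs).symm
  · filter_upwards [eventually_gt_atTop 0] with s hs
    rw [← rpow_add hs, add_sub_cancel]

end

theorem stmt_16_general (N : ℕ)
    (g : ℝ → ℝ) (hg : Continuous g)
    (m : ℝ)
    (hlim : Filter.limsup (fun s => g s / s) (nhdsWithin 0 {0}ᶜ) = -m)
    (hginf : Filter.Tendsto (fun s : ℝ => g s / s ^ (2 * N / ((N : ℝ) - 4) - 1))
      Filter.atTop (nhds 0))
    (m' q : ℝ) (hm' : m' ∈ Set.Ioo 0 m)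
    (hq : q ∈ Set.Ioo 2 (2 * N / ((N : ℝ) - 4))) :
    Filter.Tendsto (fun s : ℝ => hfun g m' s / s ^ (2 * N / ((N : ℝ) - 4) - 1))
        Filter.atTop (nhds 0) ∧
      Filter.Tendsto (fun s : ℝ => hbar g m' q s / s ^ (2 * N / ((N : ℝ) - 4) - 1))
        Filter.atTop (nhds 0) ∧
      Filter.Tendsto (fun s : ℝ => Hfun g m' s / s ^ (2 * N / ((N : ℝ) - 4)))
        Filter.atTop (nhds 0) ∧
      Filter.Tendsto (fun s : ℝ => Hbar g m' q s / s ^ (2 * N / ((N : ℝ) - 4)))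
        Filter.atTop (nhds 0) := by
  set p : ℝ := 2 * N / ((N : ℝ) - 4) - 1 with hp_def
  have hqp : q - 1 < p := by linarith [hq.2]
  have hq1 : 1 ≤ q := by linarith [hq.1]
  have h0 := hfun_eventually_eq_zero hm'.1.le (hlim ▸ neg_lt_neg hm'.2 : _ < -m')
  have hh := isLittleO_hfun (m' := m') (by linarith [hq.1]) (isLittleO_rpow_iff_tendsto_div.2 hginf)
  have hhbar := isLittleO_hbar hg h0 hqp hh
  rw [show 2 * (N : ℝ) / (N - 4) = p + 1 by rw [hp_def]; ring]
  simp only [← isLittleO_rpow_iff_tendsto_div]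
  exact ⟨hh, hhbar,
    isLittleO_intervalIntegral_rpow (by linarith) (fun _ => intervalIntegrable_hfun hg) hh,
    isLittleO_intervalIntegral_rpow (by linarith)
      (fun _ => intervalIntegrable_hbar hg h0 hq1) hhbar⟩

theorem stmt_16 (N : ℕ) (hN : 5 ≤ N)
    (g : ℝ → ℝ) (hg : Continuous g) (hodd : ∀ s, g (-s) = -g s)
    (m : ℝ) (hm : 0 < m)
    (hlim : Filter.limsup (fun s => g s / s) (nhdsWithin 0 {0}ᶜ) = -m)
    (hginf : Filter.Tendsto (fun s : ℝ => g s / s ^ (2 * N / ((N : ℝ) - 4) - 1))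
      Filter.atTop (nhds 0))
    (m' q : ℝ) (hm' : m' ∈ Set.Ioo 0 m)
    (hq : q ∈ Set.Ioo 2 (2 * N / ((N : ℝ) - 4))) :
    Filter.Tendsto (fun s : ℝ => hfun g m' s / s ^ (2 * N / ((N : ℝ) - 4) - 1))
        Filter.atTop (nhds 0) ∧
      Filter.Tendsto (fun s : ℝ => hbar g m' q s / s ^ (2 * N / ((N : ℝ) - 4) - 1))
        Filter.atTop (nhds 0) ∧
      Filter.Tendsto (fun s : ℝ => Hfun g m' s / s ^ (2 * N / ((N : ℝ) - 4)))
        Filter.atTop (nhds 0) ∧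
      Filter.Tendsto (fun s : ℝ => Hbar g m' q s / s ^ (2 * N / ((N : ℝ) - 4)))
        Filter.atTop (nhds 0) :=
  stmt_16_general N g hg m hlim hginf m' q hm' hq
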